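/- arXiv:2003.06130 — 2 statements merged into one kernel-verified Lean document; each statement's English description precedes it below -/
import Mathlib

section
/- Let Φ be a measurable functional calculus on (X, Σ) and let f : X → 𝕜 be measurable. Then: (c) the Hilbert-space adjoint of Φ(f) equals Φ(f̄), where f̄ is the complex conjugate of f; (d) Φ(f) is a normal operator and Φ(f̄)Φ(f) = Φ(|f|²) (equality of partially defined operators, where the left-hand side is defined on {x ∈ dom(Φ(f)) : Φ(f)x ∈ dom(Φ(f̄))}). -/
open scoped Topology

noncomputable section

/-- Composition `S ∘ T` of partially defined linear operators, with domain
`{x ∈ dom T | T x ∈ dom S}`. -/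
noncomputable def LinearPMap.compP {R E : Type*} [Ring R] [AddCommGroup E] [Module R E]
    (S T : E →ₗ.[R] E) : E →ₗ.[R] E where
  domain := (S.domain.comap T.toFun).map T.domain.subtype
  toFun := S.toFun.comp <| LinearMap.codRestrict S.domain
      (T.toFun.comp (Submodule.inclusion (Submodule.map_subtype_le _ _)))
      (fun x => by
        obtain ⟨y, hy, hyx⟩ := Submodule.mem_map.mp x.2
        have hxy : Submodule.inclusion
            (Submodule.map_subtype_le T.domain (S.domain.comap T.toFun)) x = y := by
          apply Subtype.ext
          simpa using hyx.symm
        rw [LinearMap.comp_apply, hxy]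
        exact hy)

/-- A measurable functional calculus on a measurable space `X`, with values in
closed partially defined operators on a Hilbert space `H` over `𝕜`. -/
structure MeasFC (X : Type*) [MeasurableSpace X] (𝕜 : Type*) [RCLike 𝕜]
    (H : Type*) [NormedAddCommGroup H] [InnerProductSpace 𝕜 H] [CompleteSpace H] where
  ap : (X → 𝕜) → (H →ₗ.[𝕜] H)
  isClosed : ∀ f : X → 𝕜, Measurable f → (ap f).IsClosed
  mfc1 : ap (fun _ => 1) = (LinearMap.id : H →ₗ[𝕜] H).toPMap ⊤
  mfc2_add : ∀ f g : X → 𝕜, Measurable f → Measurable g → ap f + ap g ≤ ap (f + g)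
  mfc2_smul : ∀ (c : 𝕜) (f : X → 𝕜), Measurable f → c • ap f ≤ ap (fun x => c * f x)
  mfc3_le : ∀ f g : X → 𝕜, Measurable f → Measurable g → (ap f).compP (ap g) ≤ ap (f * g)
  mfc3_dom : ∀ f g : X → 𝕜, Measurable f → Measurable g →
      ((ap f).compP (ap g)).domain = (ap g).domain ⊓ (ap (f * g)).domain
  mfc4_dom : ∀ f : X → 𝕜, Measurable f → (∃ C, ∀ x, ‖f x‖ ≤ C) → (ap f).domain = ⊤
  mfc4_cont : ∀ f : X → 𝕜, Measurable f → (∃ C, ∀ x, ‖f x‖ ≤ C) →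
      Continuous fun x : (ap f).domain => ap f x
  mfc4_star : ∀ f : X → 𝕜, Measurable f → (∃ C, ∀ x, ‖f x‖ ≤ C) →
      (ap f).adjoint = ap (fun x => starRingEnd 𝕜 (f x))
  mfc5 : ∀ (f : ℕ → X → 𝕜) (g : X → 𝕜), (∀ n, Measurable (f n)) → Measurable g →
      (∃ C, ∀ n x, ‖f n x‖ ≤ C) →
      (∀ x, Filter.Tendsto (fun n => f n x) Filter.atTop (𝓝 (g x))) →
      ∀ (x y : H) (hn : ∀ n, x ∈ (ap (f n)).domain) (hg : x ∈ (ap g).domain),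
        Filter.Tendsto (fun n => (inner 𝕜 (ap (f n) ⟨x, hn n⟩) y : 𝕜)) Filter.atTop
          (𝓝 (inner 𝕜 (ap g ⟨x, hg⟩) y))

/-- `B` is a `Φ`-null set: `Φ(𝟏_B) = 0`. -/
def MeasFC.IsNull {X : Type*} [MeasurableSpace X] {𝕜 : Type*} [RCLike 𝕜]
    {H : Type*} [NormedAddCommGroup H] [InnerProductSpace 𝕜 H] [CompleteSpace H]
    (Φ : MeasFC X 𝕜 H) (B : Set X) : Prop :=
  Φ.ap (B.indicator fun _ => 1) = (0 : H →ₗ[𝕜] H).toPMap ⊤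


variable {𝕜 : Type*} [RCLike 𝕜] {X : Type*} [MeasurableSpace X]
  {H : Type*} [NormedAddCommGroup H] [InnerProductSpace 𝕜 H] [CompleteSpace H]

/-!
Truncate `f` to the sets `{‖f‖ ≤ n}`. The operators `Pₙ = Φ(𝟙_{‖f‖ ≤ n})` are symmetric
idempotents, so their weak convergence to the identity (MFC5) is strong convergence. The bounded
operators `Fₙ = Φ(f 𝟙_{‖f‖ ≤ n})` satisfy `Fₙ = Pₙ Φ(f)` on `dom Φ(f)` and `Fₙ = Φ(f) Pₙ`
everywhere, so by closedness `x ∈ dom Φ(f)` as soon as `Fₙ x` converges.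

(c) Since `Fₙ* = Φ(f̄ 𝟙_{‖f‖ ≤ n})`, passing to the limit shows that `Φ(f̄)` is a formal adjoint
of `Φ(f)`. Conversely, for `y ∈ dom Φ(f)*` one finds `Φ(f̄ 𝟙_{‖f‖ ≤ n}) y = Pₙ Φ(f)* y`, which
converges, so `y ∈ dom Φ(f̄)`.

(d) By MFC3 it suffices that `dom Φ(|f|²) ⊆ dom Φ(f)`: for `x ∈ dom Φ(|f|²)` and `m ≤ n`,
`‖Fₙ x - Fₘ x‖² = ⟪x, (Pₙ - Pₘ) Φ(|f|²) x⟫`, so `Fₙ x` is Cauchy. Normality follows by applying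
this to `f` and to `f̄`.
-/

open Filter
open scoped InnerProductSpace

namespace LinearPMap

theorem mem_compP_domain_iff {R E : Type*} [Ring R] [AddCommGroup E] [Module R E]
    {S T : E →ₗ.[R] E} {x : E} :
    x ∈ (S.compP T).domain ↔ ∃ hx : x ∈ T.domain, T ⟨x, hx⟩ ∈ S.domain := by
  constructor
  · intro h
    obtain ⟨y, hy, rfl⟩ := Submodule.mem_map.mp h
    exact ⟨y.2, hy⟩
  · rintro ⟨hx, hTx⟩
    exact Submodule.mem_map.mpr ⟨⟨x, hx⟩, hTx, rfl⟩

theorem IsClosed.exists_apply_eq_of_tendsto {R E F : Type*} [CommRing R] [AddCommGroup E]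
    [AddCommGroup F] [Module R E] [Module R F] [TopologicalSpace E] [TopologicalSpace F]
    [T2Space F] {T : E →ₗ.[R] F} (hT : T.IsClosed) {ι : Type*} {l : Filter ι} [l.NeBot]
    {u : ι → T.domain} {x : E} {y : F} (hu : Tendsto (fun i => (u i : E)) l (𝓝 x))
    (hTu : Tendsto (fun i => T (u i)) l (𝓝 y)) : ∃ hx : x ∈ T.domain, T ⟨x, hx⟩ = y := by
  have hxy : (x, y) ∈ T.graph :=
    hT.mem_of_tendsto (hu.prodMk_nhds hTu) (Eventually.of_forall fun i => T.mem_graph (u i))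
  exact ⟨mem_domain_of_mem_graph hxy, ((image_iff _).mpr hxy).symm⟩

end LinearPMap

section SymmetricIdempotent

variable {E : Type*} [NormedAddCommGroup E] [InnerProductSpace 𝕜 E]

theorem norm_sub_self_sq_of_symmetric_of_idempotent {P : E → E}
    (hsymm : ∀ x y, ⟪P x, y⟫_𝕜 = ⟪x, P y⟫_𝕜)
    (hidem : ∀ x, P (P x) = P x) (x : E) :
    ‖P x - x‖ ^ 2 = ‖x‖ ^ 2 - RCLike.re ⟪P x, x⟫_𝕜 := by
  have hPP : ⟪P x, P x⟫_𝕜 = ⟪x, P x⟫_𝕜 := by rw [hsymm, hidem]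
  have h : ⟪P x - x, P x - x⟫_𝕜 = ⟪x, x⟫_𝕜 - ⟪P x, x⟫_𝕜 := by
    rw [inner_sub_sub_self, hPP]; ring
  rw [← inner_self_eq_norm_sq (𝕜 := 𝕜), h, map_sub, inner_self_eq_norm_sq]

theorem tendsto_of_tendsto_inner_of_symmetric_of_idempotent {ι : Type*} {l : Filter ι}
    {P : ι → E → E} (hsymm : ∀ i x y, ⟪P i x, y⟫_𝕜 = ⟪x, P i y⟫_𝕜)
    (hidem : ∀ i x, P i (P i x) = P i x) {x : E}
    (h : Tendsto (fun i => ⟪P i x, x⟫_𝕜) l (𝓝 ⟪x, x⟫_𝕜)) :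
    Tendsto (fun i => P i x) l (𝓝 x) := by
  have hsq : Tendsto (fun i => ‖P i x - x‖ ^ 2) l (𝓝 0) := by
    simp_rw [norm_sub_self_sq_of_symmetric_of_idempotent (hsymm _) (hidem _)]
    have := (tendsto_const_nhds (x := ‖x‖ ^ 2)).sub ((RCLike.continuous_re.tendsto _).comp h)
    rwa [inner_self_eq_norm_sq, sub_self] at this
  rw [tendsto_iff_norm_sub_tendsto_zero]
  simpa [Real.sqrt_sq (norm_nonneg _)] using hsq.sqrt

end SymmetricIdempotent

theorem Measurable.conj {α : Type*} [MeasurableSpace α] {f : α → 𝕜} (hf : Measurable f) :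
    Measurable fun x => starRingEnd 𝕜 (f x) :=
  RCLike.continuous_conj.measurable.comp hf

namespace MeasFC

section Bounded

variable (Φ : MeasFC X 𝕜 H) {φ g : X → 𝕜}

theorem mem_domain_of_bounded (hφ : Measurable φ) (hb : ∃ C, ∀ x, ‖φ x‖ ≤ C) (x : H) :
    x ∈ (Φ.ap φ).domain := by
  rw [Φ.mfc4_dom φ hφ hb]
  exact Submodule.mem_top

theorem isFormalAdjoint_of_bounded (hφ : Measurable φ) (hb : ∃ C, ∀ x, ‖φ x‖ ≤ C) :
    (Φ.ap φ).IsFormalAdjoint (Φ.ap fun x => starRingEnd 𝕜 (φ x)) := by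
  have hdense : Dense ((Φ.ap φ).domain : Set H) := by
    rw [Φ.mfc4_dom φ hφ hb, Submodule.top_coe]
    exact dense_univ
  rw [← Φ.mfc4_star φ hφ hb]
  exact (LinearPMap.adjoint_isFormalAdjoint hdense).symm

theorem ap_mul_of_bounded_left (hφ : Measurable φ) (hb : ∃ C, ∀ x, ‖φ x‖ ≤ C)
    (hg : Measurable g) {x : H} (hx : x ∈ (Φ.ap g).domain) :
    ∃ h : x ∈ (Φ.ap (φ * g)).domain, Φ.ap (φ * g) ⟨x, h⟩ =
      Φ.ap φ ⟨Φ.ap g ⟨x, hx⟩, Φ.mem_domain_of_bounded hφ hb _⟩ := by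
  have hcomp : x ∈ ((Φ.ap φ).compP (Φ.ap g)).domain :=
    LinearPMap.mem_compP_domain_iff.mpr ⟨hx, Φ.mem_domain_of_bounded hφ hb _⟩
  have hmem := Φ.mfc3_dom φ g hφ hg ▸ hcomp
  exact ⟨hmem.2,
    ((Φ.mfc3_le φ g hφ hg).2 (x := ⟨x, hcomp⟩) (y := ⟨x, hmem.2⟩) rfl).symm⟩

theorem ap_mul_of_bounded_right (hφ : Measurable φ) (hb : ∃ C, ∀ x, ‖φ x‖ ≤ C)
    (hg : Measurable g) {x : H} (hx : x ∈ (Φ.ap (g * φ)).domain) :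
    ∃ h : Φ.ap φ ⟨x, Φ.mem_domain_of_bounded hφ hb x⟩ ∈ (Φ.ap g).domain,
      Φ.ap (g * φ) ⟨x, hx⟩ = Φ.ap g ⟨_, h⟩ := by
  have hcomp : x ∈ ((Φ.ap g).compP (Φ.ap φ)).domain := by
    rw [Φ.mfc3_dom g φ hg hφ]
    exact ⟨Φ.mem_domain_of_bounded hφ hb x, hx⟩
  obtain ⟨_, h⟩ := LinearPMap.mem_compP_domain_iff.mp hcomp
  exact ⟨h, ((Φ.mfc3_le g φ hg hφ).2 (x := ⟨x, hcomp⟩) (y := ⟨x, hx⟩) rfl).symm⟩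

end Bounded

section Cutoff

variable {α : Type*}

def cutoff (f : α → 𝕜) (n : ℕ) : α → 𝕜 := {x | ‖f x‖ ≤ n}.indicator 1

theorem measurable_cutoff [MeasurableSpace α] {f : α → 𝕜} (hf : Measurable f) (n : ℕ) :
    Measurable (cutoff f n) :=
  measurable_const.indicator (measurableSet_le hf.norm measurable_const)

theorem norm_cutoff_le_one (f : α → 𝕜) (n : ℕ) (x : α) : ‖cutoff f n x‖ ≤ 1 := by
  by_cases h : ‖f x‖ ≤ n <;> simp [cutoff, h]

theorem norm_mul_cutoff_le (f : α → 𝕜) (n : ℕ) (x : α) :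
    ‖(f * cutoff f n) x‖ ≤ n := by
  by_cases h : ‖f x‖ ≤ n <;> simp [cutoff, h]

theorem conj_cutoff (f : α → 𝕜) (n : ℕ) :
    (fun x => starRingEnd 𝕜 (cutoff f n x)) = cutoff f n := by
  funext x
  by_cases h : ‖f x‖ ≤ n <;> simp [cutoff, h]

theorem cutoff_conj (f : α → 𝕜) (n : ℕ) :
    cutoff (fun x => starRingEnd 𝕜 (f x)) n = cutoff f n := by
  simp [cutoff]

theorem conj_mul_cutoff (f : α → 𝕜) (n : ℕ) :
    (fun x => starRingEnd 𝕜 ((f * cutoff f n) x)) =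
      (fun x => starRingEnd 𝕜 (f x)) * cutoff (fun x => starRingEnd 𝕜 (f x)) n := by
  funext x
  simp only [Pi.mul_apply, map_mul, cutoff_conj, congrFun (conj_cutoff f n) x]

theorem cutoff_mul_cutoff (f : α → 𝕜) (m n : ℕ) :
    cutoff f m * cutoff f n = cutoff f (min m n) := by
  funext x
  by_cases hm : ‖f x‖ ≤ m <;> by_cases hn : ‖f x‖ ≤ n <;>
    simp [cutoff, hm, hn]

theorem conj_mul_cutoff_mul_mul_cutoff (f : α → 𝕜) (m n : ℕ) :
    (fun x => starRingEnd 𝕜 ((f * cutoff f m) x)) * (f * cutoff f n) =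
      cutoff f (min m n) * fun x => starRingEnd 𝕜 (f x) * f x := by
  rw [← cutoff_mul_cutoff]
  funext x
  have hconj := congrFun (conj_cutoff f m) x
  simp only [Pi.mul_apply, map_mul] at hconj ⊢
  rw [hconj]
  ring

theorem tendsto_cutoff (f : α → 𝕜) (x : α) :
    Tendsto (fun n => cutoff f n x) atTop (𝓝 1) := by
  refine tendsto_atTop_of_eventually_const (i₀ := ⌈‖f x‖⌉₊) fun n hn => ?_
  have h : ‖f x‖ ≤ n := (Nat.le_ceil _).trans (Nat.cast_le.mpr hn)
  simp [cutoff, h]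

end Cutoff

section Truncation

variable (Φ : MeasFC X 𝕜 H) {f : X → 𝕜}

theorem mem_domain_cutoff (hf : Measurable f) (n : ℕ) (x : H) :
    x ∈ (Φ.ap (cutoff f n)).domain :=
  Φ.mem_domain_of_bounded (measurable_cutoff hf n) ⟨1, norm_cutoff_le_one f n⟩ x

theorem mem_domain_mul_cutoff (hf : Measurable f) (n : ℕ) (x : H) :
    x ∈ (Φ.ap (f * cutoff f n)).domain :=
  Φ.mem_domain_of_bounded (hf.mul (measurable_cutoff hf n)) ⟨n, norm_mul_cutoff_le f n⟩ x

def proj (hf : Measurable f) (n : ℕ) (x : H) : H :=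
  Φ.ap (cutoff f n) ⟨x, Φ.mem_domain_cutoff hf n x⟩

def trunc (hf : Measurable f) (n : ℕ) (x : H) : H :=
  Φ.ap (f * cutoff f n) ⟨x, Φ.mem_domain_mul_cutoff hf n x⟩

theorem inner_proj_left (hf : Measurable f) (n : ℕ) (x y : H) :
    ⟪Φ.proj hf n x, y⟫_𝕜 = ⟪x, Φ.proj hf n y⟫_𝕜 := by
  have h := Φ.isFormalAdjoint_of_bounded (measurable_cutoff hf n) ⟨1, norm_cutoff_le_one f n⟩
  rw [conj_cutoff] at h
  exact h ⟨x, _⟩ ⟨y, Φ.mem_domain_cutoff hf n y⟩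

theorem proj_proj (hf : Measurable f) (n : ℕ) (x : H) :
    Φ.proj hf n (Φ.proj hf n x) = Φ.proj hf n x := by
  obtain ⟨_, hPP⟩ := Φ.ap_mul_of_bounded_left (measurable_cutoff hf n)
    ⟨1, norm_cutoff_le_one f n⟩ (measurable_cutoff hf n) (Φ.mem_domain_cutoff hf n x)
  have hsq : cutoff f n * cutoff f n = cutoff f n := by rw [cutoff_mul_cutoff, min_self]
  exact hPP.symm.trans ((congrArg Φ.ap hsq).le.2 rfl)

theorem tendsto_proj (hf : Measurable f) (x : H) :
    Tendsto (fun n => Φ.proj hf n x) atTop (𝓝 x) := by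
  have hx : x ∈ (Φ.ap fun _ => 1).domain := by
    rw [Φ.mfc1]
    exact Submodule.mem_top
  have hweak := Φ.mfc5 (cutoff f) (fun _ => 1) (measurable_cutoff hf) measurable_const
    ⟨1, norm_cutoff_le_one f⟩ (tendsto_cutoff f) x x (Φ.mem_domain_cutoff hf · x) hx
  rw [show Φ.ap (fun _ => 1) ⟨x, hx⟩ = x from
    Φ.mfc1.le.2 (x := ⟨x, hx⟩) (y := ⟨x, Submodule.mem_top⟩) rfl] at hweak
  exact tendsto_of_tendsto_inner_of_symmetric_of_idempotent (Φ.inner_proj_left hf)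
    (Φ.proj_proj hf) hweak

theorem trunc_eq_proj_ap (hf : Measurable f) (n : ℕ) {x : H} (hx : x ∈ (Φ.ap f).domain) :
    Φ.trunc hf n x = Φ.proj hf n (Φ.ap f ⟨x, hx⟩) := by
  obtain ⟨_, hPf⟩ := Φ.ap_mul_of_bounded_left (measurable_cutoff hf n)
    ⟨1, norm_cutoff_le_one f n⟩ hf hx
  exact ((congrArg Φ.ap (mul_comm f (cutoff f n))).le.2 rfl).trans hPf

theorem exists_ap_proj_eq_trunc (hf : Measurable f) (n : ℕ) (x : H) :
    ∃ h : Φ.proj hf n x ∈ (Φ.ap f).domain, Φ.ap f ⟨_, h⟩ = Φ.trunc hf n x := by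
  obtain ⟨h, hfP⟩ := Φ.ap_mul_of_bounded_right (measurable_cutoff hf n)
    ⟨1, norm_cutoff_le_one f n⟩ hf (Φ.mem_domain_mul_cutoff hf n x)
  exact ⟨h, hfP.symm⟩

theorem tendsto_trunc (hf : Measurable f) {x : H} (hx : x ∈ (Φ.ap f).domain) :
    Tendsto (fun n => Φ.trunc hf n x) atTop (𝓝 (Φ.ap f ⟨x, hx⟩)) := by
  simpa only [Φ.trunc_eq_proj_ap hf _ hx] using Φ.tendsto_proj hf _

theorem dense_domain (hf : Measurable f) : Dense ((Φ.ap f).domain : Set H) := fun x =>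
  mem_closure_of_tendsto (Φ.tendsto_proj hf x)
    (Eventually.of_forall fun n => (Φ.exists_ap_proj_eq_trunc hf n x).1)

theorem exists_ap_eq_of_tendsto_trunc (hf : Measurable f) {x y : H}
    (h : Tendsto (fun n => Φ.trunc hf n x) atTop (𝓝 y)) :
    ∃ hx : x ∈ (Φ.ap f).domain, Φ.ap f ⟨x, hx⟩ = y :=
  (Φ.isClosed f hf).exists_apply_eq_of_tendsto
    (u := fun n => ⟨_, (Φ.exists_ap_proj_eq_trunc hf n x).1⟩) (Φ.tendsto_proj hf x)
    (h.congr fun n => (Φ.exists_ap_proj_eq_trunc hf n x).2.symm)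

end Truncation

section Adjoint

variable (Φ : MeasFC X 𝕜 H) {f : X → 𝕜}

theorem inner_trunc_left (hf : Measurable f) (n : ℕ) (x y : H) :
    ⟪Φ.trunc hf n x, y⟫_𝕜 = ⟪x, Φ.trunc hf.conj n y⟫_𝕜 := by
  have h := Φ.isFormalAdjoint_of_bounded (hf.mul (measurable_cutoff hf n))
    ⟨n, norm_mul_cutoff_le f n⟩
  rw [conj_mul_cutoff] at h
  exact h ⟨x, _⟩ ⟨y, Φ.mem_domain_mul_cutoff hf.conj n y⟩

theorem isFormalAdjoint_ap_conj (hf : Measurable f) :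
    (Φ.ap f).IsFormalAdjoint (Φ.ap fun x => starRingEnd 𝕜 (f x)) := by
  rintro ⟨x, hx⟩ ⟨y, hy⟩
  have h := (Φ.tendsto_trunc hf hx).inner (𝕜 := 𝕜) (tendsto_const_nhds (x := y))
  simp_rw [Φ.inner_trunc_left hf] at h
  exact tendsto_nhds_unique h (tendsto_const_nhds.inner (Φ.tendsto_trunc hf.conj hy))

theorem trunc_conj_eq_proj_adjoint (hf : Measurable f) (n : ℕ) {y : H}
    (hy : y ∈ (Φ.ap f).adjoint.domain) :
    Φ.trunc hf.conj n y = Φ.proj hf n ((Φ.ap f).adjoint ⟨y, hy⟩) := by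
  refine ext_inner_left 𝕜 fun v => ?_
  obtain ⟨hPv, hfPv⟩ := Φ.exists_ap_proj_eq_trunc hf n v
  calc ⟪v, Φ.trunc hf.conj n y⟫_𝕜
      = ⟪Φ.ap f ⟨_, hPv⟩, y⟫_𝕜 := by rw [hfPv, Φ.inner_trunc_left hf]
    _ = ⟪Φ.proj hf n v, (Φ.ap f).adjoint ⟨y, hy⟩⟫_𝕜 :=
      (LinearPMap.adjoint_isFormalAdjoint (Φ.dense_domain hf)).symm ⟨_, hPv⟩ ⟨y, hy⟩
    _ = ⟪v, Φ.proj hf n ((Φ.ap f).adjoint ⟨y, hy⟩)⟫_𝕜 := Φ.inner_proj_left hf n _ _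

theorem adjoint_ap (hf : Measurable f) :
    (Φ.ap f).adjoint = Φ.ap fun x => starRingEnd 𝕜 (f x) := by
  have hle := (Φ.isFormalAdjoint_ap_conj hf).le_adjoint (Φ.dense_domain hf)
  refine (LinearPMap.eq_of_le_of_domain_eq hle (le_antisymm hle.1 fun y hy => ?_)).symm
  have h := Φ.tendsto_proj hf ((Φ.ap f).adjoint ⟨y, hy⟩)
  simp_rw [← Φ.trunc_conj_eq_proj_adjoint hf _ hy] at h
  exact (Φ.exists_ap_eq_of_tendsto_trunc hf.conj h).1

end Adjoint

section Modulus

variable (Φ : MeasFC X 𝕜 H) {f : X → 𝕜}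

theorem inner_trunc_trunc (hf : Measurable f) (m n : ℕ) {x : H}
    (hx : x ∈ (Φ.ap fun t => starRingEnd 𝕜 (f t) * f t).domain) :
    ⟪Φ.trunc hf m x, Φ.trunc hf n x⟫_𝕜 =
      ⟪x, Φ.proj hf (min m n)
        (Φ.ap (fun t => starRingEnd 𝕜 (f t) * f t) ⟨x, hx⟩)⟫_𝕜 := by
  have hφ := (hf.mul (measurable_cutoff hf m)).conj
  have hφb : ∃ C, ∀ t, ‖starRingEnd 𝕜 ((f * cutoff f m) t)‖ ≤ C :=
    ⟨m, fun t => (RCLike.norm_conj _).trans_le (norm_mul_cutoff_le f m t)⟩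
  obtain ⟨_, hφF⟩ := Φ.ap_mul_of_bounded_left hφ hφb (hf.mul (measurable_cutoff hf n))
    (Φ.mem_domain_mul_cutoff hf n x)
  obtain ⟨_, hPg⟩ := Φ.ap_mul_of_bounded_left (measurable_cutoff hf (min m n))
    ⟨1, norm_cutoff_le_one f _⟩ (hf.conj.mul hf) hx
  calc ⟪Φ.trunc hf m x, Φ.trunc hf n x⟫_𝕜
      = ⟪x, Φ.ap _ ⟨Φ.trunc hf n x, Φ.mem_domain_of_bounded hφ hφb _⟩⟫_𝕜 :=
        Φ.isFormalAdjoint_of_bounded (hf.mul (measurable_cutoff hf m))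
          ⟨m, norm_mul_cutoff_le f m⟩
          ⟨x, _⟩ ⟨_, Φ.mem_domain_of_bounded hφ hφb _⟩
    _ = _ := congrArg _ <| hφF.symm.trans <|
        ((congrArg Φ.ap (conj_mul_cutoff_mul_mul_cutoff f m n)).le.2 rfl).trans hPg

theorem cauchySeq_trunc (hf : Measurable f) {x : H}
    (hx : x ∈ (Φ.ap fun t => starRingEnd 𝕜 (f t) * f t).domain) :
    CauchySeq fun n => Φ.trunc hf n x := by
  set z := Φ.ap (fun t => starRingEnd 𝕜 (f t) * f t) ⟨x, hx⟩
  set s : ℕ → 𝕜 := fun n => ⟪x, Φ.proj hf n z⟫_𝕜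
  have hs : Tendsto s atTop (𝓝 ⟪x, z⟫_𝕜) :=
    tendsto_const_nhds.inner (Φ.tendsto_proj hf z)
  have hsq : ∀ N n, N ≤ n →
      ‖Φ.trunc hf n x - Φ.trunc hf N x‖ ^ 2 = RCLike.re (s n - s N) := by
    intro N n hNn
    rw [← inner_self_eq_norm_sq (𝕜 := 𝕜), inner_sub_sub_self,
      Φ.inner_trunc_trunc hf n n hx, Φ.inner_trunc_trunc hf n N hx,
      Φ.inner_trunc_trunc hf N n hx, Φ.inner_trunc_trunc hf N N hx,
      min_self, min_self, min_eq_right hNn, min_eq_left hNn]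
    congr 1
    ring
  refine Metric.cauchySeq_iff'.mpr fun ε hε => ?_
  obtain ⟨N, hN⟩ := Metric.cauchySeq_iff'.mp hs.cauchySeq (ε ^ 2) (by positivity)
  refine ⟨N, fun n hn => lt_of_pow_lt_pow_left₀ 2 hε.le ?_⟩
  calc dist (Φ.trunc hf n x) (Φ.trunc hf N x) ^ 2
      = RCLike.re (s n - s N) := by rw [dist_eq_norm, hsq N n hn]
    _ ≤ ‖s n - s N‖ := RCLike.re_le_norm _
    _ < ε ^ 2 := by simpa only [dist_eq_norm] using hN n hn

theorem domain_ap_conj_mul_le (hf : Measurable f) :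
    (Φ.ap fun t => starRingEnd 𝕜 (f t) * f t).domain ≤ (Φ.ap f).domain := fun _ hx =>
  have ⟨_, hy⟩ := cauchySeq_tendsto_of_complete (Φ.cauchySeq_trunc hf hx)
  (Φ.exists_ap_eq_of_tendsto_trunc hf hy).1

theorem ap_conj_compP_ap (hf : Measurable f) :
    (Φ.ap fun t => starRingEnd 𝕜 (f t)).compP (Φ.ap f) =
      Φ.ap fun t => starRingEnd 𝕜 (f t) * f t := by
  refine LinearPMap.eq_of_le_of_domain_eq (Φ.mfc3_le _ f hf.conj hf) ?_
  rw [Φ.mfc3_dom _ f hf.conj hf]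
  exact inf_eq_right.mpr (Φ.domain_ap_conj_mul_le hf)

end Modulus

end MeasFC

/-- Theorem 2.4 (c), (d): `Φ(f)* = Φ(conj f)`, `Φ(f)` is normal and
`Φ(conj f) Φ(f) = Φ(|f|²)`. -/
theorem mfc_adjoint_and_normal (Φ : MeasFC X 𝕜 H) (f : X → 𝕜) (hf : Measurable f) :
    -- (c) the adjoint of Φ(f) is Φ(conj f)
    (Φ.ap f).adjoint = Φ.ap (fun x => starRingEnd 𝕜 (f x)) ∧
    -- (d) Φ(f) is normal: Φ(f)* Φ(f) = Φ(f) Φ(f)*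
    ((Φ.ap f).adjoint.compP (Φ.ap f) = (Φ.ap f).compP (Φ.ap f).adjoint) ∧
    -- and Φ(conj f) Φ(f) = Φ(|f|²)
    (Φ.ap (fun x => starRingEnd 𝕜 (f x))).compP (Φ.ap f) =
      Φ.ap (fun x => starRingEnd 𝕜 (f x) * f x) := by
  have hadj := Φ.adjoint_ap hf
  have hmod := Φ.ap_conj_compP_ap hf
  have hmod_conj := Φ.ap_conj_compP_ap hf.conj
  simp only [RCLike.conj_conj] at hmod_conj
  refine ⟨hadj, ?_, hmod⟩
  rw [hadj, hmod, hmod_conj]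
  simp only [mul_comm]

end
end

section
/- Let Φ be a measurable functional calculus on (X, Σ) and let f, g : X → 𝕜 be measurable. Then: (a) ker(Φ(f)) = ker(Φ(1_{{f ≠ 0}})); (b) Φ(f) = 0 if and only if f = 0 Φ-almost everywhere; (c) Φ(f) = Φ(g) if and only if f = g Φ-almost everywhere; (d) Φ(f) is injective if and only if f ≠ 0 Φ-almost everywhere. -/
open scoped Topology

noncomputable section

/-! Everything rests on the product rule (MFC3), which holds for unbounded factors too. Since
`0⁻¹ = 0`, `f⁻¹ f = 1_{f ≠ 0}` and `f 1_{f ≠ 0} = f`, so MFC3 squeezes `ker Φ(f)` between copies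
of `ker Φ(1_{f ≠ 0})`; this is (a), and (b) asks when the kernel is everything. For (c),
multiplying by the bounded nowhere-vanishing `r = (1 + |f| + |g|)⁻¹` turns `Φ(f) = Φ(g)` into the
identity `Φ(fr) = Φ(gr)` of everywhere-defined operators, so `Φ((f - g) r) = 0` and (b) applies;
conversely, if `B = {f ≠ g}` is null then `Φ(1_{Bᶜ}) = I` and
`Φ(f) = Φ(f 1_{Bᶜ}) = Φ(g 1_{Bᶜ}) = Φ(g)`. For (d), `Φ(1_{f = 0})` maps into `ker Φ(f)` because
`f 1_{f = 0} = 0`; conversely, if it vanishes then `Φ(1_{f ≠ 0}) = I - Φ(1_{f = 0}) = I`. -/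

namespace LinearPMap

section

variable {R E F : Type*} [Ring R] [AddCommGroup E] [Module R E] [AddCommGroup F] [Module R F]

def kerSet (T : E →ₗ.[R] F) : Set E := {x | ∃ hx : x ∈ T.domain, T ⟨x, hx⟩ = 0}

theorem eq_zero_iff_kerSet_eq_univ {T : E →ₗ.[R] F} :
    T = (0 : E →ₗ[R] F).toPMap ⊤ ↔ T.kerSet = Set.univ := by
  rw [Set.eq_univ_iff_forall]
  constructor
  · rintro rfl x
    exact ⟨Submodule.mem_top, rfl⟩
  · intro h
    exact ext (Submodule.eq_top_iff'.mpr fun x => (h x).1) fun x _ _ => (h x).2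

theorem injective_iff_kerSet_subset {T : E →ₗ.[R] F} :
    Function.Injective (fun x : T.domain => T x) ↔ T.kerSet ⊆ {0} := by
  change Function.Injective T.toFun ↔ _
  rw [injective_iff_map_eq_zero T.toFun]
  constructor
  · rintro h x ⟨hx, hTx⟩
    exact congrArg Subtype.val (h ⟨x, hx⟩ hTx)
  · intro h x hTx
    exact Subtype.ext (h ⟨x.2, hTx⟩)

theorem add_neg_cancel_of_domain_eq_top {T : E →ₗ.[R] F} (hT : T.domain = ⊤) : T + -T = 0 :=
  ext (by rw [add_domain, neg_domain, inf_idem, hT]; rfl) fun _ _ _ => add_neg_cancel _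

theorem eq_zero_of_add_eq_of_domain_eq_top {S T : E →ₗ.[R] F} (hT : T.domain = ⊤)
    (h : S + T = T) : S = 0 :=
  calc S = S + (T + -T) := by rw [add_neg_cancel_of_domain_eq_top hT, add_zero]
    _ = 0 := by rw [← add_assoc, h, add_neg_cancel_of_domain_eq_top hT]

end

section

variable {R E : Type*} [Ring R] [AddCommGroup E] [Module R E]

theorem mem_compP_domain {S T : E →ₗ.[R] E} {x : E} :
    x ∈ (S.compP T).domain ↔ ∃ hx : x ∈ T.domain, T ⟨x, hx⟩ ∈ S.domain := by
  constructor
  · rintro ⟨y, hy, rfl⟩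
    exact ⟨y.2, hy⟩
  · rintro ⟨hx, hTx⟩
    exact ⟨⟨x, hx⟩, hTx, rfl⟩

theorem compP_apply {S T : E →ₗ.[R] E} {x : E} (hx : x ∈ T.domain) (hTx : T ⟨x, hx⟩ ∈ S.domain)
    (hST : x ∈ (S.compP T).domain) : S.compP T ⟨x, hST⟩ = S ⟨T ⟨x, hx⟩, hTx⟩ :=
  rfl

theorem compP_id (S : E →ₗ.[R] E) : S.compP (LinearMap.id.toPMap ⊤) = S :=
  ext (Submodule.ext fun x => by simp [mem_compP_domain]) fun _ _ _ => rfl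

end

end LinearPMap

theorem exists_norm_indicator_const_le {α E : Type*} [SeminormedAddGroup E] (B : Set α) (c : E) :
    ∃ C, ∀ x, ‖B.indicator (fun _ => c) x‖ ≤ C :=
  ⟨‖c‖, fun _ => norm_indicator_le_norm_self _ _⟩

theorem norm_mul_inv_ofReal_le_one {𝕜 : Type*} [RCLike 𝕜] {a : 𝕜} {ρ : ℝ} (h : ‖a‖ ≤ ρ) :
    ‖a * (ρ : 𝕜)⁻¹‖ ≤ 1 := by
  rw [norm_mul, norm_inv, RCLike.norm_ofReal, abs_of_nonneg ((norm_nonneg a).trans h)]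
  exact mul_inv_le_one_of_le₀ h ((norm_nonneg a).trans h)

namespace MeasFC

open LinearPMap

variable {𝕜 : Type*} [RCLike 𝕜] {X : Type*} [MeasurableSpace X]
  {H : Type*} [NormedAddCommGroup H] [InnerProductSpace 𝕜 H] [CompleteSpace H]
  (Φ : MeasFC X 𝕜 H) {f g : X → 𝕜}

theorem ap_add (hf : Measurable f) (hg : Measurable g) (hfb : ∃ C, ∀ x, ‖f x‖ ≤ C)
    (hgb : ∃ C, ∀ x, ‖g x‖ ≤ C) : Φ.ap (f + g) = Φ.ap f + Φ.ap g :=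
  (eq_of_le_of_domain_eq (Φ.mfc2_add f g hf hg) <| by
    rw [add_domain, Φ.mfc4_dom f hf hfb, Φ.mfc4_dom g hg hgb, inf_idem,
      Φ.mfc4_dom (f + g) (hf.add hg) ?_]
    obtain ⟨C, hC⟩ := hfb
    obtain ⟨D, hD⟩ := hgb
    exact ⟨C + D, fun x => (norm_add_le _ _).trans (add_le_add (hC x) (hD x))⟩).symm

theorem ap_mul_eq_compP (hf : Measurable f) (hg : Measurable g) (hdom : (Φ.ap g).domain = ⊤) :
    Φ.ap (f * g) = (Φ.ap f).compP (Φ.ap g) :=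
  (eq_of_le_of_domain_eq (Φ.mfc3_le f g hf hg) <| by
    rw [Φ.mfc3_dom f g hf hg, hdom, top_inf_eq]).symm

theorem ap_mul_eq_of_ap_eq_id (hf : Measurable f) (hg : Measurable g)
    (hg_id : Φ.ap g = LinearMap.id.toPMap ⊤) : Φ.ap (f * g) = Φ.ap f := by
  rw [Φ.ap_mul_eq_compP hf hg (by rw [hg_id]; rfl), hg_id, compP_id]

theorem kerSet_subset_kerSet_mul (hf : Measurable f) (hg : Measurable g) :
    (Φ.ap g).kerSet ⊆ (Φ.ap (f * g)).kerSet := by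
  rintro x ⟨hx, hgx⟩
  have hgx' : Φ.ap g ⟨x, hx⟩ ∈ (Φ.ap f).domain := hgx ▸ (Φ.ap f).domain.zero_mem
  have hx' : x ∈ ((Φ.ap f).compP (Φ.ap g)).domain := mem_compP_domain.mpr ⟨hx, hgx'⟩
  refine ⟨(Φ.mfc3_le f g hf hg).1 hx', ?_⟩
  rw [← (Φ.mfc3_le f g hf hg).2 (x := ⟨x, hx'⟩) rfl, compP_apply hx hgx',
    show (⟨_, hgx'⟩ : (Φ.ap f).domain) = 0 from Subtype.ext hgx, LinearPMap.map_zero]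

theorem ap_zero : Φ.ap 0 = (0 : H →ₗ[𝕜] H).toPMap ⊤ := by
  have h0 : ∃ C, ∀ x, ‖(0 : X → 𝕜) x‖ ≤ C := ⟨0, fun _ => by simp⟩
  refine eq_zero_of_add_eq_of_domain_eq_top (Φ.mfc4_dom 0 measurable_zero h0) ?_
  rw [← Φ.ap_add measurable_zero measurable_zero h0 h0, add_zero]

theorem apply_mem_kerSet_of_mul_eq_zero (hf : Measurable f) (hg : Measurable g)
    (hgb : ∃ C, ∀ x, ‖g x‖ ≤ C) (hfg : f * g = 0) (x : H) (hx : x ∈ (Φ.ap g).domain) :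
    Φ.ap g ⟨x, hx⟩ ∈ (Φ.ap f).kerSet := by
  have hcomp : ((Φ.ap f).compP (Φ.ap g)).kerSet = Set.univ := by
    rw [← eq_zero_iff_kerSet_eq_univ, ← Φ.ap_mul_eq_compP hf hg (Φ.mfc4_dom g hg hgb), hfg,
      ap_zero]
  obtain ⟨hx', hval⟩ : x ∈ ((Φ.ap f).compP (Φ.ap g)).kerSet := hcomp ▸ trivial
  obtain ⟨_, hgx⟩ := mem_compP_domain.mp hx'
  exact ⟨hgx, by rwa [compP_apply hx hgx] at hval⟩

theorem ap_indicator_add_ap_indicator_compl {B : Set X} (hB : MeasurableSet B) :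
    Φ.ap (B.indicator fun _ => 1) + Φ.ap (Bᶜ.indicator fun _ => 1) =
      LinearMap.id.toPMap ⊤ := by
  rw [← Φ.ap_add (measurable_const.indicator hB) (measurable_const.indicator hB.compl)
    (exists_norm_indicator_const_le B (1 : 𝕜)) (exists_norm_indicator_const_le Bᶜ (1 : 𝕜)),
    Set.indicator_self_add_compl, Φ.mfc1]

theorem ap_indicator_compl_eq_id {B : Set X} (hB : MeasurableSet B) (hnull : Φ.IsNull B) :
    Φ.ap (Bᶜ.indicator fun _ => 1) = LinearMap.id.toPMap ⊤ := by
  rw [← Φ.ap_indicator_add_ap_indicator_compl hB,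
    show Φ.ap (B.indicator fun _ => 1) = 0 from hnull, zero_add]

theorem kerSet_ap_eq_kerSet_ap_indicator (hf : Measurable f) :
    (Φ.ap f).kerSet = (Φ.ap ({x | f x ≠ 0}.indicator fun _ => 1)).kerSet := by
  have hS : MeasurableSet {x | f x ≠ 0} := (measurableSet_singleton 0).compl.preimage hf
  have hinv : f⁻¹ * f = {x | f x ≠ 0}.indicator fun _ => 1 := by
    ext x
    by_cases hx : f x = 0 <;> simp [hx]
  have hmul : f * {x | f x ≠ 0}.indicator (fun _ => 1) = f := by
    ext x
    by_cases hx : f x = 0 <;> simp [hx]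
  refine subset_antisymm ?_ ?_
  · rw [← hinv]
    exact Φ.kerSet_subset_kerSet_mul hf.inv hf
  · conv_rhs => rw [← hmul]
    exact Φ.kerSet_subset_kerSet_mul hf (measurable_const.indicator hS)

theorem ap_eq_zero_iff_isNull (hf : Measurable f) :
    Φ.ap f = (0 : H →ₗ[𝕜] H).toPMap ⊤ ↔ Φ.IsNull {x | f x ≠ 0} := by
  rw [MeasFC.IsNull, eq_zero_iff_kerSet_eq_univ, eq_zero_iff_kerSet_eq_univ,
    Φ.kerSet_ap_eq_kerSet_ap_indicator hf]

theorem isNull_ne_of_ap_eq (hf : Measurable f) (hg : Measurable g) (h : Φ.ap f = Φ.ap g) :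
    Φ.IsNull {x | f x ≠ g x} := by
  set ρ : X → ℝ := fun x => 1 + ‖f x‖ + ‖g x‖
  set r : X → 𝕜 := fun x => ((ρ x : ℝ) : 𝕜)⁻¹
  have hρ : ∀ x, 0 < ρ x := fun x => by positivity
  have hr : Measurable r :=
    (RCLike.measurable_ofReal.comp ((measurable_const.add hf.norm).add hg.norm)).inv
  have hrb : ∃ C, ∀ x, ‖r x‖ ≤ C := ⟨1, fun x => by
    simpa [r] using norm_mul_inv_ofReal_le_one (a := (1 : 𝕜)) (ρ := ρ x)
      (by simp only [norm_one, ρ]; linarith [norm_nonneg (f x), norm_nonneg (g x)])⟩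
  have hgrb : ∃ C, ∀ x, ‖(g * r) x‖ ≤ C :=
    ⟨1, fun x => norm_mul_inv_ofReal_le_one (by simp only [ρ]; linarith [norm_nonneg (f x)])⟩
  have hwb : ∃ C, ∀ x, ‖((f - g) * r) x‖ ≤ C := ⟨1, fun x => norm_mul_inv_ofReal_le_one
    (by simp only [ρ, Pi.sub_apply]; linarith [norm_sub_le (f x) (g x)])⟩
  have hfr_eq_gr : Φ.ap (f * r) = Φ.ap (g * r) := by
    rw [Φ.ap_mul_eq_compP hf hr (Φ.mfc4_dom r hr hrb),
      Φ.ap_mul_eq_compP hg hr (Φ.mfc4_dom r hr hrb), h]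
  have hw : Φ.ap ((f - g) * r) = (0 : H →ₗ[𝕜] H).toPMap ⊤ := by
    refine eq_zero_of_add_eq_of_domain_eq_top (Φ.mfc4_dom _ (hg.mul hr) hgrb) ?_
    rw [← Φ.ap_add ((hf.sub hg).mul hr) (hg.mul hr) hwb hgrb, ← add_mul, sub_add_cancel,
      hfr_eq_gr]
  have hsupp : {x | ((f - g) * r) x ≠ 0} = {x | f x ≠ g x} := by
    ext x
    simp [r, sub_eq_zero, (hρ x).ne']
  rw [← hsupp]
  exact (Φ.ap_eq_zero_iff_isNull ((hf.sub hg).mul hr)).mp hw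

theorem ap_eq_of_isNull_ne (hf : Measurable f) (hg : Measurable g)
    (hnull : Φ.IsNull {x | f x ≠ g x}) : Φ.ap f = Φ.ap g := by
  have hB : MeasurableSet {x | f x ≠ g x} := (measurableSet_eq_fun hf hg).compl
  have hfg : f * {x | f x ≠ g x}ᶜ.indicator (fun _ => 1) =
      g * {x | f x ≠ g x}ᶜ.indicator (fun _ => 1) := by
    ext x
    by_cases hx : f x = g x <;> simp [hx]
  have hm : Measurable ({x | f x ≠ g x}ᶜ.indicator fun _ => (1 : 𝕜)) :=
    measurable_const.indicator hB.compl
  have hid := Φ.ap_indicator_compl_eq_id hB hnull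
  rw [← Φ.ap_mul_eq_of_ap_eq_id hf hm hid, hfg, Φ.ap_mul_eq_of_ap_eq_id hg hm hid]

theorem injective_iff_isNull (hf : Measurable f) :
    Function.Injective (fun x : (Φ.ap f).domain => Φ.ap f x) ↔ Φ.IsNull {x | f x = 0} := by
  have hZ : MeasurableSet {x | f x = 0} := (measurableSet_singleton (0 : 𝕜)).preimage hf
  rw [injective_iff_kerSet_subset]
  constructor
  · intro hker
    have hq : Measurable ({x | f x = 0}.indicator fun _ => (1 : 𝕜)) :=
      measurable_const.indicator hZ
    have hqb := exists_norm_indicator_const_le {x | f x = 0} (1 : 𝕜)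
    have hfq : f * {x | f x = 0}.indicator (fun _ => 1) = 0 := by
      ext x
      by_cases hx : f x = 0 <;> simp [hx]
    refine eq_zero_iff_kerSet_eq_univ.mpr (Set.eq_univ_of_forall fun x => ?_)
    have hx : x ∈ (Φ.ap ({x | f x = 0}.indicator fun _ => 1)).domain := by
      rw [Φ.mfc4_dom _ hq hqb]
      trivial
    exact ⟨hx, hker (Φ.apply_mem_kerSet_of_mul_eq_zero hf hq hqb hfq x hx)⟩
  · intro hnull
    have hid : Φ.ap ({x | f x ≠ 0}.indicator fun _ => 1) = LinearMap.id.toPMap ⊤ :=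
      Φ.ap_indicator_compl_eq_id hZ hnull
    rw [Φ.kerSet_ap_eq_kerSet_ap_indicator hf, hid]
    exact fun x ⟨_, hx⟩ => hx

end MeasFC

variable {𝕜 : Type*} [RCLike 𝕜] {X : Type*} [MeasurableSpace X]
  {H : Type*} [NormedAddCommGroup H] [InnerProductSpace 𝕜 H] [CompleteSpace H]

/-- Lemma 3.1: kernels and `Φ`-null sets. -/
theorem mfc_null_sets (Φ : MeasFC X 𝕜 H) (f g : X → 𝕜)
    (hf : Measurable f) (hg : Measurable g) :
    -- (a) ker Φ(f) = ker Φ(1_{f ≠ 0})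
    ({x : H | ∃ hx : x ∈ (Φ.ap f).domain, Φ.ap f ⟨x, hx⟩ = 0} =
      {x : H | ∃ hx : x ∈ (Φ.ap ({y | f y ≠ 0}.indicator fun _ => 1)).domain,
        Φ.ap ({y | f y ≠ 0}.indicator fun _ => 1) ⟨x, hx⟩ = 0}) ∧
    -- (b) Φ(f) = 0 iff f = 0 Φ-almost everywhere
    (Φ.ap f = (0 : H →ₗ[𝕜] H).toPMap ⊤ ↔ Φ.IsNull {x | f x ≠ 0}) ∧
    -- (c) Φ(f) = Φ(g) iff f = g Φ-almost everywhere
    (Φ.ap f = Φ.ap g ↔ Φ.IsNull {x | f x ≠ g x}) ∧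
    -- (d) Φ(f) is injective iff f ≠ 0 Φ-almost everywhere
    ((Function.Injective fun x : (Φ.ap f).domain => Φ.ap f x) ↔ Φ.IsNull {x | f x = 0}) :=
  ⟨Φ.kerSet_ap_eq_kerSet_ap_indicator hf, Φ.ap_eq_zero_iff_isNull hf,
    ⟨Φ.isNull_ne_of_ap_eq hf hg, Φ.ap_eq_of_isNull_ne hf hg⟩, Φ.injective_iff_isNull hf⟩

end
end
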